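/- Let Φ_t be the (1,2)-oscillator flow on ℝ⁴, Φ_t(x₁, x₂, ξ₁, ξ₂) = ( x₁ cos t + ξ₁ sin t, x₂ cos 2t + ξ₂ sin 2t, −x₁ sin t + ξ₁ cos t, −x₂ sin 2t + ξ₂ cos 2t ), and q(x, ξ) = ¼ ( (x₁² − ξ₁²) x₂ + 2 x₁ ξ₁ ξ₂ ). If (x, ξ) ∈ ℝ⁴ satisfies ½(x₁² + ξ₁²) + (x₂² + ξ₂²) = 1 and q(x, ξ) ≠ 0, then the orbit t ↦ Φ_t(x, ξ) is periodic with minimal positive period exactly 2π. In particular, for every regular value F₀ of q restricted to the energy surface (i.e. F₀ ∉ {−√3/9, 0, √3/9}), every closed trajectory in the set { p₂ = 1, q = F₀ } has minimal period 2π. -/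
import Mathlib


/-- `p₂(v) = ½(x₁² + ξ₁²) + (x₂² + ξ₂²)`, with `v = (x₁, x₂, ξ₁, ξ₂)`. -/
noncomputable def p2v (v : Fin 4 → ℝ) : ℝ :=
  (1 / 2) * ((v 0) ^ 2 + (v 2) ^ 2) + ((v 1) ^ 2 + (v 3) ^ 2)

/-- `q(v) = ¼((x₁² − ξ₁²)x₂ + 2x₁ξ₁ξ₂)`. -/
noncomputable def qbv (v : Fin 4 → ℝ) : ℝ :=
  (1 / 4) * (((v 0) ^ 2 - (v 2) ^ 2) * (v 1) + 2 * (v 0) * (v 2) * (v 3))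

/-- The (1,2)-oscillator Hamiltonian flow of `p₂`. -/
noncomputable def flow12 (t : ℝ) (v : Fin 4 → ℝ) : Fin 4 → ℝ :=
  ![v 0 * Real.cos t + v 2 * Real.sin t,
    v 1 * Real.cos (2 * t) + v 3 * Real.sin (2 * t),
    -(v 0) * Real.sin t + v 2 * Real.cos t,
    -(v 1) * Real.sin (2 * t) + v 3 * Real.cos (2 * t)]

/-- If `p₂(v) = 1` and `q(v) ≠ 0`, the orbit `t ↦ Φ_t(v)` of the
(1,2)-oscillator flow is periodic with minimal positive period exactly `2π`.
In particular, for every regular value `F₀ ∉ {−√3/9, 0, √3/9}` of `q` on the energy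
surface, every closed trajectory in `{p₂ = 1, q = F₀}` has minimal period `2π`. -/
theorem statement17 :
    (∀ v : Fin 4 → ℝ, p2v v = 1 → qbv v ≠ 0 →
      (∀ t : ℝ, flow12 (t + 2 * Real.pi) v = flow12 t v) ∧
      (∀ T' : ℝ, 0 < T' → T' < 2 * Real.pi → ∃ t : ℝ, flow12 (t + T') v ≠ flow12 t v)) ∧
    (∀ F0 : ℝ, F0 ∉ ({-(Real.sqrt 3 / 9), 0, Real.sqrt 3 / 9} : Set ℝ) →
      ∀ v : Fin 4 → ℝ, p2v v = 1 → qbv v = F0 →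
        (∀ t : ℝ, flow12 (t + 2 * Real.pi) v = flow12 t v) ∧
        (∀ T' : ℝ, 0 < T' → T' < 2 * Real.pi →
          ∃ t : ℝ, flow12 (t + T') v ≠ flow12 t v)) := by
  have main : ∀ v : Fin 4 → ℝ, qbv v ≠ 0 →
      (∀ t : ℝ, flow12 (t + 2 * Real.pi) v = flow12 t v) ∧
      (∀ T' : ℝ, 0 < T' → T' < 2 * Real.pi → ∃ t : ℝ, flow12 (t + T') v ≠ flow12 t v) := by
    intro v hq
    constructor
    · intro t
      have h2 : 2 * (t + 2 * Real.pi) = (2 * t + 2 * Real.pi) + 2 * Real.pi := by ring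
      funext i
      fin_cases i <;>
        simp [flow12, h2, Real.cos_add_two_pi, Real.sin_add_two_pi]
    · intro T' hT0 hT2
      by_contra hcon
      push_neg at hcon
      have h02 : v 0 ^ 2 + v 2 ^ 2 ≠ 0 := by
        intro h
        have h0 : v 0 = 0 := by nlinarith [sq_nonneg (v 0), sq_nonneg (v 2)]
        have h2 : v 2 = 0 := by nlinarith [sq_nonneg (v 0), sq_nonneg (v 2)]
        apply hq
        simp [qbv, h0, h2]
      have he := hcon 0
      have e0 : v 0 * Real.cos T' + v 2 * Real.sin T' = v 0 := by
        have := congrFun he 0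
        simpa [flow12] using this
      have e2 : -(v 0) * Real.sin T' + v 2 * Real.cos T' = v 2 := by
        have := congrFun he 2
        simpa [flow12] using this
      have hc : Real.cos T' = 1 := by
        have key : (v 0 ^ 2 + v 2 ^ 2) * (Real.cos T' - 1) = 0 := by linear_combination v 0 * e0 + v 2 * e2
        have := mul_eq_zero.1 key
        rcases this with h | h
        · exact absurd h h02
        · linarith
      have hT'0 : T' = 0 := by
        have := (Real.cos_eq_one_iff_of_lt_of_lt (by linarith [Real.two_pi_pos]) hT2).1 hc
        exact this
      linarith
  constructor
  · intro v _ hq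
    exact main v hq
  · intro F0 hF0 v _ hqv
    apply main
    rw [hqv]
    intro h
    apply hF0
    simp [h]
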